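/- arXiv:2410.14163 — 4 statements merged into one kernel-verified Lean document; each statement's English description precedes it below -/
import Mathlib

section
/- conv(S) = ⋂_{λ ∈ ℝ²} conv(S_λ); that is, the intersection over all aggregation weights λ ∈ ℝ² of the convex hulls of the aggregated sets equals the convex hull of S. -/
/-!
On `S` the two equations force `y₁ = y₂ = 1/(2x)` with `x ∈ [1/2, 1]`, so `conv S` is the region
between the hyperbola arc `x y = 1/2` and its chord `x + y = 3/2` inside the plane `y₁ = y₂`.
If `λ₁ + λ₂ > 0`, the equation of `S_λ` reads `x (λ₁y₁ + λ₂y₂) = (λ₁ + λ₂)/2 > 0`, so `S_λ` lies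
in the convex region `{x > 0, x (λ₁y₁ + λ₂y₂) ≥ (λ₁ + λ₂)/2}` (the epigraph of `c/x` after a
linear change of coordinates), and the aggregated constraint is `≥ 0` on `conv S_λ`. By
continuity in `λ` this persists on `λ₁ + λ₂ = 0`; the weights `±(1, -1)` then give `x y₁ = x y₂`,
the weight `(1, 0)` gives `x y₁ ≥ 1/2`, and `conv S_(1,0)` also lies below the chord.
-/

open Set

/-- The box `[0,1]³`. -/
def unitCube : Set (ℝ × ℝ × ℝ) :=
  {p | p.1 ∈ Icc (0:ℝ) 1 ∧ p.2.1 ∈ Icc (0:ℝ) 1 ∧ p.2.2 ∈ Icc (0:ℝ) 1}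

/-- `S = {(x,y₁,y₂) ∈ [0,1]³ : x·y₁ = 1/2, x·y₂ = 1/2}`. -/
def setS : Set (ℝ × ℝ × ℝ) :=
  {p ∈ unitCube | p.1 * p.2.1 = 1/2 ∧ p.1 * p.2.2 = 1/2}

/-- The aggregated set `S_λ` with weights `l = (λ₁, λ₂)`. -/
def setAgg (l : ℝ × ℝ) : Set (ℝ × ℝ × ℝ) :=
  {p ∈ unitCube | l.1 * (p.1 * p.2.1 - 1/2) + l.2 * (p.1 * p.2.2 - 1/2) = 0}

lemma convex_unitCube : Convex ℝ unitCube :=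
  (convex_Icc 0 1).prod ((convex_Icc 0 1).prod (convex_Icc 0 1))

lemma setS_subset_setAgg (l : ℝ × ℝ) : setS ⊆ setAgg l := by
  rintro q ⟨hq, h₁, h₂⟩
  exact ⟨hq, by rw [h₁, h₂]; ring⟩

lemma convexHull_setAgg_subset_unitCube (l : ℝ × ℝ) : convexHull ℝ (setAgg l) ⊆ unitCube :=
  convexHull_min (fun _ hq => hq.1) convex_unitCube

lemma convex_setOf_le_mul {c : ℝ} (hc : 0 ≤ c) :
    Convex ℝ {p : ℝ × ℝ | 0 < p.1 ∧ c ≤ p.1 * p.2} := by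
  have hset : {p : ℝ × ℝ | 0 < p.1 ∧ c ≤ p.1 * p.2} =
      {p | p.1 ∈ Ioi 0 ∧ (c • fun x : ℝ => x ^ (-1 : ℤ)) p.1 ≤ p.2} := by
    refine Set.ext fun p => and_congr_right fun hp => ?_
    rw [Pi.smul_apply, smul_eq_mul, zpow_neg_one, ← div_eq_mul_inv, div_le_iff₀ hp, mul_comm]
  rw [hset]
  exact ((convexOn_zpow (-1)).smul hc).convex_epigraph

lemma le_of_forall_lt_one_mul_le' {𝕜 : Type*} [Field 𝕜] [LinearOrder 𝕜]
    [IsStrictOrderedRing 𝕜] [TopologicalSpace 𝕜] [OrderTopology 𝕜] {a b : 𝕜}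
    (h : ∀ t < 1, t * a ≤ b) : a ≤ b := by
  have hclosed : IsClosed {t : 𝕜 | t * a ≤ b} :=
    isClosed_le (continuous_id.mul continuous_const) continuous_const
  have h1 := hclosed.closure_subset_iff.2 h (closure_Iio (1 : 𝕜) ▸ mem_Iic.2 le_rfl)
  rwa [mem_ofPred_eq, one_mul] at h1

lemma convexHull_setAgg_subset_nonneg {l : ℝ × ℝ} (hl : 0 < l.1 + l.2) :
    convexHull ℝ (setAgg l) ⊆
      {q | 0 ≤ l.1 * (q.1 * q.2.1 - 1/2) + l.2 * (q.1 * q.2.2 - 1/2)} := by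
  let f : ℝ × ℝ × ℝ →ₗ[ℝ] ℝ × ℝ :=
    LinearMap.id.prodMap (l.1 • LinearMap.fst ℝ ℝ ℝ + l.2 • LinearMap.snd ℝ ℝ ℝ)
  have hK := (convex_setOf_le_mul (c := (l.1 + l.2) / 2) (by positivity)).linear_preimage f
  refine fun q hq => ?_
  have := convexHull_min ?_ hK hq
  · change 0 < q.1 ∧ _ ≤ q.1 * (l.1 * q.2.1 + l.2 * q.2.2) at this
    change (0:ℝ) ≤ _
    linarith [this.2]
  · rintro p ⟨hp, hagg⟩
    change 0 < p.1 ∧ _ ≤ p.1 * (l.1 * p.2.1 + l.2 * p.2.2)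
    have heq : p.1 * (l.1 * p.2.1 + l.2 * p.2.2) = (l.1 + l.2) / 2 := by
      linear_combination hagg
    refine ⟨hp.1.1.lt_of_ne fun h0 => ?_, heq.ge⟩
    rw [← h0, zero_mul] at heq
    linarith

lemma aggregate_nonneg_of_forall_mem_convexHull {q : ℝ × ℝ × ℝ}
    (hq : ∀ l, q ∈ convexHull ℝ (setAgg l)) {l : ℝ × ℝ} (hl : 0 ≤ l.1 + l.2) :
    0 ≤ l.1 * (q.1 * q.2.1 - 1/2) + l.2 * (q.1 * q.2.2 - 1/2) := by
  -- perturb `l` to `l + (1 - t) • (1, 1)`, which has positive weight sum for `t < 1`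
  suffices h : q.1 * q.2.1 + q.1 * q.2.2 - 1 ≤
      l.1 * (q.1 * q.2.1 - 1/2) + l.2 * (q.1 * q.2.2 - 1/2) + (q.1 * q.2.1 + q.1 * q.2.2 - 1) by
    linarith
  refine le_of_forall_lt_one_mul_le' fun t ht => ?_
  have := convexHull_setAgg_subset_nonneg (l := (l.1 + (1 - t), l.2 + (1 - t)))
    (by dsimp only; linarith) (hq _)
  change (0 : ℝ) ≤ _ at this
  linarith

lemma convexHull_setAgg_one_zero_subset :
    convexHull ℝ (setAgg (1, 0)) ⊆ {q | q.1 + q.2.1 ≤ 3/2} := by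
  refine convexHull_min ?_ (convex_halfSpace_le ?_ _)
  · rintro ⟨x, y₁, y₂⟩ ⟨⟨⟨hx₀, hx₁⟩, ⟨hy₀, hy₁⟩, -⟩, hagg⟩
    change x + y₁ ≤ 3/2
    nlinarith
  · exact (LinearMap.fst ℝ ℝ _ + LinearMap.fst ℝ ℝ ℝ ∘ₗ LinearMap.snd ℝ ℝ _).isLinear

lemma mk_self_mem_segment {x a b y : ℝ} (ha : a ≤ y) (hb : y ≤ b) :
    (x, y, y) ∈ segment ℝ (x, a, a) (x, b, b) := by
  obtain ⟨s, t, hs, ht, hst, rfl⟩ : y ∈ segment ℝ a b := by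
    rw [segment_eq_Icc (ha.trans hb)]
    exact ⟨ha, hb⟩
  refine ⟨s, t, hs, ht, hst, ?_⟩
  simp only [Prod.smul_mk, Prod.mk_add_mk, smul_eq_mul, ← add_mul, hst, one_mul]

lemma mk_mem_segment_of_mem_Icc {x : ℝ} (hx : x ∈ Icc (1/2) 1) :
    (x, 3/2 - x, 3/2 - x) ∈ segment ℝ ((1/2 : ℝ), (1 : ℝ), (1 : ℝ)) (1, 1/2, 1/2) := by
  refine ⟨2 - 2 * x, 2 * x - 1, by linarith [hx.2], by linarith [hx.1], by ring, ?_⟩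
  simp only [Prod.smul_mk, Prod.mk_add_mk, smul_eq_mul, Prod.mk.injEq]
  refine ⟨?_, ?_, ?_⟩ <;> ring

lemma mk_mem_convexHull_setS {x y : ℝ} (hx : 0 ≤ x) (hxy : 1/2 ≤ x * y) (hchord : x + y ≤ 3/2) :
    (x, y, y) ∈ convexHull ℝ setS := by
  have hxpos : 0 < x := hx.lt_of_ne (by rintro rfl; linarith)
  have hxIcc : x ∈ Icc (1/2) 1 := ⟨by nlinarith, by nlinarith⟩
  have hcurve : (x, 1 / (2 * x), 1 / (2 * x)) ∈ setS := by
    have hinv : 1 / (2 * x) ∈ Icc (0 : ℝ) 1 :=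
      ⟨by positivity, (div_le_one (by positivity)).2 (by linarith [hxIcc.1])⟩
    have hprod : x * (1 / (2 * x)) = 1 / 2 := by field_simp
    exact ⟨⟨⟨hx, hxIcc.2⟩, hinv, hinv⟩, hprod, hprod⟩
  have hchord_mem : (x, 3/2 - x, 3/2 - x) ∈ convexHull ℝ setS :=
    segment_subset_convexHull (by norm_num [setS, unitCube]) (by norm_num [setS, unitCube])
      (mk_mem_segment_of_mem_Icc hxIcc)
  refine (convex_convexHull ℝ setS).segment_subset (subset_convexHull ℝ setS hcurve) hchord_mem
    (mk_self_mem_segment ?_ (by linarith))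
  rw [div_le_iff₀ (by positivity)]
  linarith

theorem stmt1 :
    convexHull ℝ setS = ⋂ l : ℝ × ℝ, convexHull ℝ (setAgg l) := by
  refine (subset_iInter fun l => convexHull_mono (setS_subset_setAgg l)).antisymm ?_
  rintro ⟨x, y₁, y₂⟩ hq
  rw [mem_iInter] at hq
  have hx : 0 ≤ x := (convexHull_setAgg_subset_unitCube 0 (hq 0)).1.1
  have hxy₁ := aggregate_nonneg_of_forall_mem_convexHull hq (l := (1, 0)) (by norm_num)
  have h₂₁ := aggregate_nonneg_of_forall_mem_convexHull hq (l := (1, -1)) (by norm_num)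
  have h₁₂ := aggregate_nonneg_of_forall_mem_convexHull hq (l := (-1, 1)) (by norm_num)
  dsimp only at hxy₁ h₂₁ h₁₂
  have hprod : x * y₁ = x * y₂ := by linarith
  obtain rfl : y₁ = y₂ := mul_left_cancel₀ (by rintro rfl; linarith) hprod
  exact mk_mem_convexHull_setS hx (by linarith) (convexHull_setAgg_one_zero_subset (hq (1, 0)))
end

section
/- ⋂_{λ ∈ ℝ²} conv(S_λ) ⊆ {(x, y1, y2) ∈ [0,1]³ : x + y1 ≤ 3/2}. -/
open Set

lemma convex_unitCube_sep_add_le (c : ℝ) :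
    Convex ℝ {p ∈ unitCube | p.1 + p.2.1 ≤ c} :=
  convex_unitCube.inter
    (convex_halfSpace_le
      (LinearMap.fst ℝ ℝ _ + (LinearMap.fst ℝ ℝ ℝ).comp (LinearMap.snd ℝ ℝ _)).isLinear c)

lemma add_le_one_add_mul {x y : ℝ} (hx : x ≤ 1) (hy : y ≤ 1) : x + y ≤ 1 + x * y := by
  nlinarith [mul_nonneg (sub_nonneg.2 hx) (sub_nonneg.2 hy)]

lemma setAgg_one_zero_subset : setAgg (1, 0) ⊆ {p ∈ unitCube | p.1 + p.2.1 ≤ 3/2} := by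
  rintro p ⟨hp, hprod⟩
  refine ⟨hp, ?_⟩
  have hxy : p.1 * p.2.1 = 1/2 := by linarith
  linarith [add_le_one_add_mul hp.1.2 hp.2.1.2]

theorem stmt8 :
    (⋂ l : ℝ × ℝ, convexHull ℝ (setAgg l)) ⊆
      {p ∈ unitCube | p.1 + p.2.1 ≤ 3/2} :=
  (iInter_subset _ (1, 0)).trans
    (convexHull_min setAgg_one_zero_subset (convex_unitCube_sep_add_le _))
end

section
/- conv(S) = {(x, y1, y2) ∈ [0,1]³ : x·(y1 + y2) ≥ 1, x + y1 ≤ 3/2, and y1 = y2}. -/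
/-!
All points of `S` lie on the plane `y₁ = y₂`, where `S` is the hyperbola arc `x y = 1/2` between
`(1/2, 1)` and `(1, 1/2)`; so the question is two-dimensional. The region above a branch of a
hyperbola is the epigraph of the convex function `x ↦ 1/(2x)`, and cutting it by the chord
`x + y ≤ 3/2` gives a convex set containing the arc. Conversely, a point `(x, y)` of that set lies
on the chord `x + y = c` of the arc, between its two intersection points `((c ∓ d)/2, (c ± d)/2)`
with `d = √(c² - 2)`, because `(x - y)² = c² - 4xy ≤ d²`.
-/

open Set

def hyperbolaArc : Set (ℝ × ℝ) :=
  {p | p.1 ∈ Icc (0:ℝ) 1 ∧ p.2 ∈ Icc (0:ℝ) 1 ∧ p.1 * p.2 = 1/2}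

def hyperbolaCap : Set (ℝ × ℝ) :=
  {p | p.1 ∈ Icc (0:ℝ) 1 ∧ p.2 ∈ Icc (0:ℝ) 1 ∧ 1/2 ≤ p.1 * p.2 ∧ p.1 + p.2 ≤ 3/2}

def diagEmbedding : ℝ × ℝ →ₗ[ℝ] ℝ × ℝ × ℝ :=
  (LinearMap.fst ℝ ℝ ℝ).prod ((LinearMap.snd ℝ ℝ ℝ).prod (LinearMap.snd ℝ ℝ ℝ))

theorem convex_hyperbolaCap : Convex ℝ hyperbolaCap := by
  have hepi : Convex ℝ {p : ℝ × ℝ | p.1 ∈ Ioi 0 ∧ (1/2 : ℝ) • p.1 ^ (-1 : ℤ) ≤ p.2} :=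
    ((convexOn_zpow (-1)).smul (c := (1/2 : ℝ)) (by norm_num)).convex_epigraph
  have hbox : Convex ℝ (Icc (0:ℝ) 1 ×ˢ Icc (0:ℝ) 1) := (convex_Icc 0 1).prod (convex_Icc 0 1)
  have hchord : Convex ℝ {p : ℝ × ℝ | p.1 + p.2 ≤ 3/2} :=
    convex_halfSpace_le (LinearMap.fst ℝ ℝ ℝ + LinearMap.snd ℝ ℝ ℝ).isLinear _
  convert (hbox.inter hepi).inter hchord using 1
  ext ⟨x, y⟩
  simp only [hyperbolaCap, mem_ofPred_eq, mem_inter_iff, mem_prod, mem_Ioi, zpow_neg_one,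
    smul_eq_mul]
  constructor
  · rintro ⟨hx, hy, hxy, hsum⟩
    have hx0 : 0 < x := lt_of_le_of_ne hx.1 (by rintro rfl; norm_num at hxy)
    refine ⟨⟨⟨hx, hy⟩, hx0, ?_⟩, hsum⟩
    rw [← div_eq_mul_inv, div_le_iff₀ hx0]
    linarith
  · rintro ⟨⟨⟨hx, hy⟩, hx0, hxy⟩, hsum⟩
    rw [← div_eq_mul_inv, div_le_iff₀ hx0] at hxy
    exact ⟨hx, hy, by linarith, hsum⟩

theorem hyperbolaArc_subset_hyperbolaCap : hyperbolaArc ⊆ hyperbolaCap := by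
  rintro ⟨x, y⟩ ⟨hx, hy, hxy⟩
  exact ⟨hx, hy, hxy.ge, by nlinarith [mul_nonneg (sub_nonneg.2 hx.2) (sub_nonneg.2 hy.2)]⟩

theorem mk_mem_hyperbolaArc {u v : ℝ} (hu : 0 ≤ u) (hv : 0 ≤ v) (huv : u * v = 1/2)
    (hsum : u + v ≤ 3/2) : (u, v) ∈ hyperbolaArc := by
  -- `(1 - u)(1 - v) = 1 - (u + v) + uv ≥ 0`, and `u, v` cannot both exceed `1`.
  have hprod : 0 ≤ (1 - u) * (1 - v) := by nlinarith
  exact ⟨⟨hu, by nlinarith⟩, ⟨hv, by nlinarith⟩, huv⟩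

theorem hyperbolaCap_subset_convexHull : hyperbolaCap ⊆ convexHull ℝ hyperbolaArc := by
  rintro ⟨x, y⟩ ⟨⟨hx, -⟩, ⟨hy, -⟩, hxy, hsum⟩
  set c := x + y
  set d := √(c ^ 2 - 2)
  have hd0 : 0 ≤ d := Real.sqrt_nonneg _
  have hd : d ^ 2 = c ^ 2 - 2 := Real.sq_sqrt (by nlinarith [sq_nonneg (x - y)])
  have hdc : d ≤ c := by nlinarith
  obtain ⟨hlo, hhi⟩ : -d ≤ x - y ∧ x - y ≤ d := abs_le_of_sq_le_sq' (by nlinarith) hd0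
  set f : ℝ →ᵃ[ℝ] ℝ × ℝ := AffineMap.lineMap (0, c) (1, c - 1)
  have hf : ∀ t, f t = (t, c - t) := fun t => by
    simp only [f, AffineMap.lineMap_apply_module, Prod.smul_mk, smul_eq_mul, mul_zero, mul_one,
      Prod.mk_add_mk, zero_add, Prod.mk.injEq, true_and]
    ring
  have hconv : Convex ℝ (f ⁻¹' convexHull ℝ hyperbolaArc) :=
    (convex_convexHull ℝ _).affine_preimage f
  have hend : ∀ t, 0 ≤ t → 0 ≤ c - t → t * (c - t) = 1/2 → t ∈ f ⁻¹' convexHull ℝ hyperbolaArc :=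
    fun t ht hct hprod => by
      rw [mem_preimage, hf]
      exact subset_convexHull ℝ _ (mk_mem_hyperbolaArc ht hct hprod (by linarith))
  have hx_mem := hconv.ordConnected.out
    (hend ((c - d) / 2) (by linarith) (by linarith) (by linear_combination (-1/4) * hd))
    (hend ((c + d) / 2) (by linarith) (by linarith) (by linear_combination (-1/4) * hd))
    (show x ∈ Icc ((c - d) / 2) ((c + d) / 2) from ⟨by linarith, by linarith⟩)
  rwa [mem_preimage, hf, show c - x = y by ring] at hx_mem

theorem convexHull_hyperbolaArc : convexHull ℝ hyperbolaArc = hyperbolaCap :=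
  (convexHull_min hyperbolaArc_subset_hyperbolaCap convex_hyperbolaCap).antisymm
    hyperbolaCap_subset_convexHull

theorem mem_image_diagEmbedding {s : Set (ℝ × ℝ)} {p : ℝ × ℝ × ℝ} :
    p ∈ diagEmbedding '' s ↔ (p.1, p.2.1) ∈ s ∧ p.2.1 = p.2.2 := by
  constructor
  · rintro ⟨q, hq, rfl⟩
    exact ⟨hq, rfl⟩
  · obtain ⟨x, y₁, y₂⟩ := p
    rintro ⟨hp, rfl : y₁ = y₂⟩
    exact ⟨(x, y₁), hp, rfl⟩

theorem setS_eq_image : setS = diagEmbedding '' hyperbolaArc := by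
  ext ⟨x, y₁, y₂⟩
  rw [mem_image_diagEmbedding]
  constructor
  · rintro ⟨⟨hx, hy₁, -⟩, h₁, h₂⟩
    have hx0 : x ≠ 0 := by rintro rfl; norm_num at h₁
    exact ⟨⟨hx, hy₁, h₁⟩, mul_left_cancel₀ hx0 (h₁.trans h₂.symm)⟩
  · rintro ⟨⟨hx, hy₁, h₁⟩, rfl : y₁ = y₂⟩
    exact ⟨⟨hx, hy₁, hy₁⟩, h₁, h₁⟩

theorem image_hyperbolaCap :
    diagEmbedding '' hyperbolaCap =
      {p ∈ unitCube | p.1 * (p.2.1 + p.2.2) ≥ 1 ∧ p.1 + p.2.1 ≤ 3/2 ∧ p.2.1 = p.2.2} := by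
  ext ⟨x, y₁, y₂⟩
  rw [mem_image_diagEmbedding]
  constructor
  · rintro ⟨⟨hx, hy₁, hprod, hsum⟩, rfl : y₁ = y₂⟩
    exact ⟨⟨hx, hy₁, hy₁⟩, by linarith, hsum, rfl⟩
  · rintro ⟨⟨hx, hy₁, -⟩, hprod, hsum, rfl : y₁ = y₂⟩
    exact ⟨⟨hx, hy₁, by linarith, hsum⟩, rfl⟩

theorem stmt9 :
    convexHull ℝ setS =
      {p ∈ unitCube | p.1 * (p.2.1 + p.2.2) ≥ 1 ∧ p.1 + p.2.1 ≤ 3/2 ∧ p.2.1 = p.2.2} := by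
  rw [setS_eq_image, ← LinearMap.image_convexHull, convexHull_hyperbolaArc, image_hyperbolaCap]
end

section
/- Let (x̂, ŷ1, ŷ2) ∈ [0,1]³ satisfy x̂·(ŷ1 + ŷ2) ≥ 1, x̂ + ŷ1 ≤ 3/2, ŷ1 = ŷ2, x̂ > 1/2, and ŷ1 < 1. Set x̃ = (x̂ − 1/2)/(1 − ŷ1), ỹ = (1 − ŷ1)/(2·x̂ − 1), and μ = (2·x̂·ŷ1 − 1)/(2·x̂ + ŷ1 − 2). Then (x̃, ỹ, ỹ) ∈ S, 0 ≤ μ ≤ 1, and (x̂, ŷ1, ŷ2) = μ·(1/2, 1, 1) + (1 − μ)·(x̃, ỹ, ỹ). -/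
open Set

/-!
In the plane `y₁ = y₂ = y`, the ray from the apex `(1/2, 1)` through `(x, y)` meets the hyperbola
`x y = 1/2` again at `(x̃, ỹ)`: with `a = 1 - y` and `b = 2x - 1` one has `x̃ = b / (2a)` and
`ỹ = a / b`, so `x̃ ỹ = 1/2`, and `1 - μ = a b / (2x + y - 2) > 0`. The point `(x̃, ỹ)` lies in the unit
square because `x + y ≤ 3/2` (i.e. `b ≤ 2a`) and `2x + y > 2` (i.e. `a < b`); the latter follows
from `2xy ≥ 1` via `2x (2x + y - 2) ≥ (2x - 1)² > 0`.
-/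

lemma two_lt_two_mul_add {x y : ℝ} (hx : 1/2 < x) (hxy : 1 ≤ 2 * x * y) : 2 < 2 * x + y := by
  nlinarith [mul_pos (sub_pos.2 hx) (sub_pos.2 hx)]

lemma mk_mem_setS {x y : ℝ} (hx : x ∈ Icc (0:ℝ) 1) (hy : y ∈ Icc (0:ℝ) 1) (hxy : x * y = 1/2) :
    (x, y, y) ∈ setS :=
  ⟨⟨hx, hy, hy⟩, hxy, hxy⟩

lemma ray_hyperbola_point_mem_setS {x y : ℝ} (hx : 1/2 < x) (hy : y < 1) (hxy : 1 ≤ 2 * x * y)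
    (hsum : x + y ≤ 3/2) :
    ((x - 1/2) / (1 - y), (1 - y) / (2 * x - 1), (1 - y) / (2 * x - 1)) ∈ setS := by
  have ha : 0 < 1 - y := by linarith
  have hb : 0 < 2 * x - 1 := by linarith
  have hab : 1 - y < 2 * x - 1 := by linarith [two_lt_two_mul_add hx hxy]
  refine mk_mem_setS ⟨div_nonneg (by linarith) ha.le, ?_⟩
    ⟨div_nonneg ha.le hb.le, (div_le_one hb).2 hab.le⟩ ?_
  · rw [div_le_one ha]; linarith
  · rw [div_mul_div_comm, div_eq_iff (mul_pos ha hb).ne']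
    ring

lemma apex_weight_mem_Icc {x y : ℝ} (hx : 1/2 < x) (hy : y < 1) (hxy : 1 ≤ 2 * x * y) :
    (2 * x * y - 1) / (2 * x + y - 2) ∈ Icc (0:ℝ) 1 := by
  have hd : 0 < 2 * x + y - 2 := by linarith [two_lt_two_mul_add hx hxy]
  refine ⟨div_nonneg (by linarith) hd.le, (div_le_one hd).2 ?_⟩
  nlinarith [mul_pos (sub_pos.2 hx) (sub_pos.2 hy)]

lemma eq_apex_combination {x y μ xt yt : ℝ} (hd : 2 * x + y - 2 ≠ 0)
    (hμ : μ * (2 * x + y - 2) = 2 * x * y - 1)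
    (hxt : xt * (1 - y) = x - 1/2) (hyt : yt * (2 * x - 1) = 1 - y) :
    x = μ * (1/2) + (1 - μ) * xt ∧ y = μ * 1 + (1 - μ) * yt := by
  constructor <;> refine mul_left_cancel₀ hd ?_
  · linear_combination (xt - 1/2) * hμ - (2 * x - 1) * hxt
  · linear_combination (yt - 1) * hμ - (1 - y) * hyt

theorem stmt19_general (xh y1h y2h xt yt μ : ℝ)
    (h1 : xh * (y1h + y2h) ≥ 1) (h2 : xh + y1h ≤ 3/2) (h3 : y1h = y2h)
    (h4 : 1/2 < xh) (h5 : y1h < 1)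
    (hxt : xt = (xh - 1/2) / (1 - y1h))
    (hyt : yt = (1 - y1h) / (2 * xh - 1))
    (hμ : μ = (2 * xh * y1h - 1) / (2 * xh + y1h - 2)) :
    (xt, yt, yt) ∈ setS ∧ 0 ≤ μ ∧ μ ≤ 1 ∧
    (xh, y1h, y2h) = μ • ((1/2 : ℝ), (1 : ℝ), (1 : ℝ)) + (1 - μ) • (xt, yt, yt) := by
  subst h3 hxt hyt hμ
  have hxy : 1 ≤ 2 * xh * y1h := by linarith
  have hd : 0 < 2 * xh + y1h - 2 := sub_pos.2 (two_lt_two_mul_add h4 hxy)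
  have hb : 0 < 2 * xh - 1 := by linarith
  obtain ⟨hμ0, hμ1⟩ := apex_weight_mem_Icc h4 h5 hxy
  obtain ⟨hx, hy⟩ := eq_apex_combination hd.ne' (div_mul_cancel₀ _ hd.ne')
    (div_mul_cancel₀ _ (sub_pos.2 h5).ne') (div_mul_cancel₀ _ hb.ne')
  refine ⟨ray_hyperbola_point_mem_setS h4 h5 hxy h2, hμ0, hμ1, ?_⟩
  simpa only [Prod.smul_mk, smul_eq_mul, Prod.mk_add_mk, Prod.mk.injEq] using ⟨hx, hy, hy⟩

theorem stmt19 (xh y1h y2h xt yt μ : ℝ)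
    (hbox : (xh, y1h, y2h) ∈ unitCube)
    (h1 : xh * (y1h + y2h) ≥ 1) (h2 : xh + y1h ≤ 3/2) (h3 : y1h = y2h)
    (h4 : 1/2 < xh) (h5 : y1h < 1)
    (hxt : xt = (xh - 1/2) / (1 - y1h))
    (hyt : yt = (1 - y1h) / (2 * xh - 1))
    (hμ : μ = (2 * xh * y1h - 1) / (2 * xh + y1h - 2)) :
    (xt, yt, yt) ∈ setS ∧ 0 ≤ μ ∧ μ ≤ 1 ∧
    (xh, y1h, y2h) = μ • ((1/2 : ℝ), (1 : ℝ), (1 : ℝ)) + (1 - μ) • (xt, yt, yt) :=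
  stmt19_general xh y1h y2h xt yt μ h1 h2 h3 h4 h5 hxt hyt hμ
end
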